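/- Let X be a real Banach space. If A ⊂ X × X* is maximal self-cancelling, then A^⊢ is maximal monotone or −A^⊢ is maximal monotone, where −A^⊢ = {(x, −x*) : (x, x*) ∈ A^⊢}. -/

import Mathlib

/-!
Write `q(p) = ⟨p.1, p.2⟩` and `b(p, r) = ⟨p.1, r.2⟩ + ⟨r.1, p.2⟩`, the quadratic form on
`X × X*` and its polar form, so that `A^⊢` is the `b`-orthogonal of `A`. A self-cancelling `A`
is `q`-isotropic, hence `A ⊆ A^⊢`, and maximality of `A` says that every `q`-isotropic vector
of `A^⊢` already lies in `A`. If `q` took both signs on the subspace `A^⊢`, say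
`q(p) < 0 < q(r)`, some `r + t p` would be `q`-isotropic, hence in `A` and `b`-orthogonal to
`p` and `r`; these two equations force `t² q(p) = q(r)`, a contradiction. So `q ≥ 0` on `A^⊢`
or on `-A^⊢ = (-A)^⊢`. Finally, when `q ≥ 0` on the subspace `A^⊢` it is monotone, and
maximal because a monotone set containing the isotropic subspace `A` is `b`-orthogonal to it.
-/

/-- A subset of `X × X*` is monotone if `⟨x - y, x* - y*⟩ ≥ 0` for all its pairs of points. -/
def IsMonotoneSet {X : Type*} [NormedAddCommGroup X] [NormedSpace ℝ X]
    (T : Set (X × (X →L[ℝ] ℝ))) : Prop :=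
  ∀ p ∈ T, ∀ q ∈ T, 0 ≤ (p.2 - q.2) (p.1 - q.1)

/-- A subset of `X × X*` is maximal monotone if it is monotone and maximal with respect
to inclusion among monotone subsets. -/
def IsMaximalMonotone {X : Type*} [NormedAddCommGroup X] [NormedSpace ℝ X]
    (T : Set (X × (X →L[ℝ] ℝ))) : Prop :=
  IsMonotoneSet T ∧ ∀ S, IsMonotoneSet S → T ⊆ S → S = T

/-- `B^⊢ = {(y, y*) : ⟨x, y*⟩ + ⟨y, x*⟩ = 0 for all (x, x*) ∈ B}`. -/
def vdash {X : Type*} [NormedAddCommGroup X] [NormedSpace ℝ X]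
    (B : Set (X × (X →L[ℝ] ℝ))) : Set (X × (X →L[ℝ] ℝ)) :=
  {q | ∀ p ∈ B, p.2 q.1 + q.2 p.1 = 0}

/-- `-B = {(x, -x*) : (x, x*) ∈ B}`. -/
def negOp {X : Type*} [NormedAddCommGroup X] [NormedSpace ℝ X]
    (B : Set (X × (X →L[ℝ] ℝ))) : Set (X × (X →L[ℝ] ℝ)) :=
  (fun p => (p.1, -p.2)) '' B

/-- `A ⊆ X × X*` is self-cancelling if it is a linear subspace of `X × X*` and the
duality product vanishes on it. -/
def IsSelfCancelling {X : Type*} [NormedAddCommGroup X] [NormedSpace ℝ X]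
    (A : Set (X × (X →L[ℝ] ℝ))) : Prop :=
  (∃ S : Submodule ℝ (X × (X →L[ℝ] ℝ)), A = ↑S) ∧ ∀ p ∈ A, p.2 p.1 = 0

section

variable {X : Type*} [NormedAddCommGroup X] [NormedSpace ℝ X]

lemma snd_apply_fst_add (p r : X × (X →L[ℝ] ℝ)) :
    (p + r).2 (p + r).1 = p.2 p.1 + r.2 r.1 + (p.2 r.1 + r.2 p.1) := by
  simp only [Prod.fst_add, Prod.snd_add, add_apply, map_add]
  ring

lemma snd_apply_fst_smul (t : ℝ) (p : X × (X →L[ℝ] ℝ)) :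
    (t • p).2 (t • p).1 = t ^ 2 * p.2 p.1 := by
  simp only [Prod.smul_fst, Prod.smul_snd, smul_apply, map_smul, smul_eq_mul]
  ring

def vdashSubmodule (B : Set (X × (X →L[ℝ] ℝ))) : Submodule ℝ (X × (X →L[ℝ] ℝ)) where
  carrier := vdash B
  add_mem' {r s} hr hs p hp := by
    simp only [Prod.fst_add, Prod.snd_add, add_apply, map_add]
    linear_combination hr p hp + hs p hp
  zero_mem' p _ := by simp
  smul_mem' t r hr p hp := by
    simp only [Prod.smul_fst, Prod.smul_snd, smul_apply, map_smul, smul_eq_mul]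
    linear_combination t * hr p hp

lemma mem_negOp_iff {B : Set (X × (X →L[ℝ] ℝ))} {p : X × (X →L[ℝ] ℝ)} :
    p ∈ negOp B ↔ (p.1, -p.2) ∈ B := by
  constructor
  · rintro ⟨r, hr, rfl⟩
    simpa using hr
  · intro h
    exact ⟨(p.1, -p.2), h, by simp⟩

lemma vdash_negOp (B : Set (X × (X →L[ℝ] ℝ))) : vdash (negOp B) = negOp (vdash B) := by
  ext r
  rw [mem_negOp_iff]
  simp only [vdash, negOp, Set.mem_ofPred_eq, Set.forall_mem_image, neg_apply]
  refine forall₂_congr fun p _ => ?_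
  constructor <;> intro h <;> linarith

lemma IsSelfCancelling.negOp {A : Set (X × (X →L[ℝ] ℝ))} (hA : IsSelfCancelling A) :
    IsSelfCancelling (negOp A) := by
  obtain ⟨⟨S, rfl⟩, hS⟩ := hA
  let f := (LinearMap.id : X →ₗ[ℝ] X).prodMap (-LinearMap.id : (X →L[ℝ] ℝ) →ₗ[ℝ] _)
  refine ⟨⟨S.map f, (Submodule.map_coe f S).symm⟩, ?_⟩
  rintro _ ⟨p, hp, rfl⟩
  simpa using hS p hp

lemma IsSelfCancelling.subset_vdash {A : Set (X × (X →L[ℝ] ℝ))} (hA : IsSelfCancelling A) :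
    A ⊆ vdash A := by
  obtain ⟨⟨S, rfl⟩, hS⟩ := hA
  intro r hr p hp
  have := hS _ (S.add_mem hp hr)
  rw [snd_apply_fst_add, hS p hp, hS r hr] at this
  linarith

lemma IsSelfCancelling.mem_of_mem_vdash {A : Set (X × (X →L[ℝ] ℝ))} (hA : IsSelfCancelling A)
    (hmaxA : ∀ B, IsSelfCancelling B → A ⊆ B → B = A) {r : X × (X →L[ℝ] ℝ)}
    (hr : r ∈ vdash A) (hr₀ : r.2 r.1 = 0) : r ∈ A := by
  obtain ⟨⟨S, rfl⟩, hS⟩ := hA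
  have hsc : IsSelfCancelling (X := X) ↑(S ⊔ Submodule.span ℝ {r}) := by
    refine ⟨⟨_, rfl⟩, fun p hp => ?_⟩
    obtain ⟨a, ha, _, hb, rfl⟩ := Submodule.mem_sup.mp hp
    obtain ⟨t, rfl⟩ := Submodule.mem_span_singleton.mp hb
    rw [snd_apply_fst_add, snd_apply_fst_smul, hS a ha, hr₀]
    simp only [Prod.smul_fst, Prod.smul_snd, smul_apply, map_smul, smul_eq_mul]
    linear_combination t * hr a ha
  rw [← hmaxA _ hsc (SetLike.coe_subset_coe.mpr le_sup_left)]
  exact Submodule.mem_sup_right (Submodule.mem_span_singleton_self r)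

lemma IsSelfCancelling.pairing_nonneg_or_nonpos {A : Set (X × (X →L[ℝ] ℝ))}
    (hA : IsSelfCancelling A) (hmaxA : ∀ B, IsSelfCancelling B → A ⊆ B → B = A) :
    (∀ p ∈ vdash A, 0 ≤ p.2 p.1) ∨ ∀ p ∈ vdash A, p.2 p.1 ≤ 0 := by
  by_contra! ⟨⟨r, hr, hr_neg⟩, p, hp, hp_pos⟩
  obtain ⟨t, ht⟩ := exists_quadratic_eq_zero hr_neg.ne
    ⟨√(discrim (r.2 r.1) (r.2 p.1 + p.2 r.1) (p.2 p.1)), by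
      rw [Real.mul_self_sqrt]; unfold discrim; nlinarith⟩
  have hs : p + t • r ∈ vdash A :=
    (vdashSubmodule A).add_mem hp ((vdashSubmodule A).smul_mem t hr)
  have hsA : p + t • r ∈ A := hA.mem_of_mem_vdash hmaxA hs (by
    rw [snd_apply_fst_add, snd_apply_fst_smul]
    simp only [Prod.smul_fst, Prod.smul_snd, smul_apply, map_smul, smul_eq_mul]
    linear_combination ht)
  have hp_orth := hp _ hsA
  have hr_orth := hr _ hsA
  simp only [Prod.fst_add, Prod.snd_add, Prod.smul_fst, Prod.smul_snd, add_apply, map_add,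
    smul_apply, map_smul, smul_eq_mul] at hp_orth hr_orth
  nlinarith [sq_nonneg t]

/-- Monotonicity tested against `t • a` makes an affine function of `t : ℝ` nonnegative, so its
slope `b(a, s)` vanishes. -/
lemma IsMonotoneSet.subset_vdash {T A : Set (X × (X →L[ℝ] ℝ))} (hT : IsMonotoneSet T)
    (hA : IsSelfCancelling A) (hAT : A ⊆ T) : T ⊆ vdash A := by
  obtain ⟨⟨S, rfl⟩, hS⟩ := hA
  intro s hs a ha
  by_contra hb
  set t := (s.2 s.1 + 1) / (a.2 s.1 + s.2 a.1)
  have := hT s hs _ (hAT (S.smul_mem t ha))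
  simp only [Prod.smul_fst, Prod.smul_snd, sub_apply, map_sub,
    smul_apply, map_smul, smul_eq_mul, hS a ha] at this
  have ht : t * (a.2 s.1 + s.2 a.1) = s.2 s.1 + 1 := div_mul_cancel₀ _ hb
  linarith

lemma isMaximalMonotone_vdash {A : Set (X × (X →L[ℝ] ℝ))} (hA : IsSelfCancelling A)
    (hpos : ∀ p ∈ vdash A, 0 ≤ p.2 p.1) : IsMaximalMonotone (vdash A) :=
  ⟨fun _ hp _ hr => hpos _ ((vdashSubmodule A).sub_mem hp hr),
    fun _ hT hsub => (hT.subset_vdash hA (hA.subset_vdash.trans hsub)).antisymm hsub⟩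

end

theorem vdash_or_neg_vdash_maximalMonotone_general {X : Type*} [NormedAddCommGroup X]
    [NormedSpace ℝ X] (A : Set (X × (X →L[ℝ] ℝ)))
    (hA : IsSelfCancelling A)
    (hmaxA : ∀ B, IsSelfCancelling B → A ⊆ B → B = A) :
    IsMaximalMonotone (vdash A) ∨ IsMaximalMonotone (negOp (vdash A)) := by
  rcases hA.pairing_nonneg_or_nonpos hmaxA with hpos | hneg
  · exact Or.inl (isMaximalMonotone_vdash hA hpos)
  · refine Or.inr ?_
    rw [← vdash_negOp]
    refine isMaximalMonotone_vdash hA.negOp fun p hp => ?_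
    rw [vdash_negOp, mem_negOp_iff] at hp
    simpa using hneg _ hp

/-- If `A ⊆ X × X*` is maximal self-cancelling, then `A^⊢` or `-A^⊢` is maximal
monotone. -/
theorem vdash_or_neg_vdash_maximalMonotone {X : Type*} [NormedAddCommGroup X]
    [NormedSpace ℝ X] [CompleteSpace X] (A : Set (X × (X →L[ℝ] ℝ)))
    (hA : IsSelfCancelling A)
    (hmaxA : ∀ B, IsSelfCancelling B → A ⊆ B → B = A) :
    IsMaximalMonotone (vdash A) ∨ IsMaximalMonotone (negOp (vdash A)) :=
  vdash_or_neg_vdash_maximalMonotone_general A hA hmaxA
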